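/- arXiv:0909.0436 — 8 statements merged into one kernel-verified Lean document; each statement's English description precedes it below -/
import Mathlib

section
/- Let B be an m×k matrix and A an m×n matrix over R. Then: (1) for every matrix U with m columns, (B | A) ≤ₙ (UB | UA); (2) for every matrix V with k rows, (BV | A) ≤ₙ (B | A); (3) for every k×n matrix G, (B | A + BG) ≤ₙ (B | A). Moreover, ≤ₙ is the least pre-order on such pairs satisfying (1), (2) and (3): if ≺ is any pre-order on pairs of matrices (with the right matrix having n columns and both matrices having equally many rows) satisfying (1), (2) and (3), then (B | A) ≤ₙ (B' | A') implies (B | A) ≺ (B' | A'). -/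
/-- A pair `(B | A)` of matrices over `R`, where `A` has `n` columns and `B` has the
same number of rows as `A`. -/
structure MatrixPair (R : Type*) [Ring R] (n : ℕ) where
  m : ℕ
  k : ℕ
  B : Matrix (Fin m) (Fin k) R
  A : Matrix (Fin m) (Fin n) R

/-- `(B | A) ≤ₙ (B' | A')`: there exist matrices `U`, `V`, `G` with
`U * B = B' * V` and `U * A = A' + B' * G`. -/
def MatrixPair.le {R : Type*} [Ring R] {n : ℕ} (p q : MatrixPair R n) : Prop :=
  ∃ (U : Matrix (Fin q.m) (Fin p.m) R) (V : Matrix (Fin q.k) (Fin p.k) R)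
    (G : Matrix (Fin q.k) (Fin n) R),
    U * p.B = q.B * V ∧ U * p.A = q.A + q.B * G

/-! A relation `(B | A) ≤ₙ (B' | A')` factors as
`(B | A) → (UB | UA) = (B'V | A' + B'G) ← (B' | A' + B'G) ← (B' | A')`,
one application of each rule. -/

namespace MatrixPair

variable {R : Type*} [Ring R] {n : ℕ}

theorem le_mul_left (p : MatrixPair R n) {m' : ℕ} (U : Matrix (Fin m') (Fin p.m) R) :
    p.le ⟨m', p.k, U * p.B, U * p.A⟩ :=
  ⟨U, 1, 0, by simp, by simp⟩

theorem mul_right_le (p : MatrixPair R n) {k' : ℕ} (V : Matrix (Fin p.k) (Fin k') R) :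
    MatrixPair.le ⟨p.m, k', p.B * V, p.A⟩ p :=
  ⟨1, V, 0, by simp, by simp⟩

theorem add_mul_le (p : MatrixPair R n) (G : Matrix (Fin p.k) (Fin n) R) :
    MatrixPair.le ⟨p.m, p.k, p.B, p.A + p.B * G⟩ p :=
  ⟨1, 1, G, by simp, by simp⟩

theorem le_of_rules {r : MatrixPair R n → MatrixPair R n → Prop}
    (htrans : ∀ p q s, r p q → r q s → r p s)
    (rule_mul_left : ∀ (p : MatrixPair R n) (m' : ℕ) (U : Matrix (Fin m') (Fin p.m) R),
      r p ⟨m', p.k, U * p.B, U * p.A⟩)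
    (rule_mul_right : ∀ (p : MatrixPair R n) (k' : ℕ) (V : Matrix (Fin p.k) (Fin k') R),
      r ⟨p.m, k', p.B * V, p.A⟩ p)
    (rule_add_mul : ∀ (p : MatrixPair R n) (G : Matrix (Fin p.k) (Fin n) R),
      r ⟨p.m, p.k, p.B, p.A + p.B * G⟩ p)
    {p q : MatrixPair R n} (hpq : p.le q) : r p q := by
  obtain ⟨U, V, G, hB, hA⟩ := hpq
  have to_image : r p ⟨q.m, p.k, q.B * V, q.A + q.B * G⟩ := by
    simpa only [hB, hA] using rule_mul_left p q.m U
  have from_shift : r ⟨q.m, p.k, q.B * V, q.A + q.B * G⟩ q :=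
    htrans _ _ _ (rule_mul_right ⟨q.m, q.k, q.B, q.A + q.B * G⟩ p.k V) (rule_add_mul q G)
  exact htrans _ _ _ to_image from_shift

end MatrixPair

/-- The three Rules of Divisibility hold for `≤ₙ`, and `≤ₙ` is the least pre-order
on pairs of matrices satisfying them. -/
theorem rules_of_divisibility (R : Type*) [Ring R] (n : ℕ) :
    (∀ (p : MatrixPair R n) (m' : ℕ) (U : Matrix (Fin m') (Fin p.m) R),
      p.le ⟨m', p.k, U * p.B, U * p.A⟩) ∧
    (∀ (p : MatrixPair R n) (k' : ℕ) (V : Matrix (Fin p.k) (Fin k') R),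
      MatrixPair.le ⟨p.m, k', p.B * V, p.A⟩ p) ∧
    (∀ (p : MatrixPair R n) (G : Matrix (Fin p.k) (Fin n) R),
      MatrixPair.le ⟨p.m, p.k, p.B, p.A + p.B * G⟩ p) ∧
    (∀ r : MatrixPair R n → MatrixPair R n → Prop,
      (∀ p, r p p) →
      (∀ p q s, r p q → r q s → r p s) →
      (∀ (p : MatrixPair R n) (m' : ℕ) (U : Matrix (Fin m') (Fin p.m) R),
        r p ⟨m', p.k, U * p.B, U * p.A⟩) →
      (∀ (p : MatrixPair R n) (k' : ℕ) (V : Matrix (Fin p.k) (Fin k') R),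
        r ⟨p.m, k', p.B * V, p.A⟩ p) →
      (∀ (p : MatrixPair R n) (G : Matrix (Fin p.k) (Fin n) R),
        r ⟨p.m, p.k, p.B, p.A + p.B * G⟩ p) →
      ∀ p q : MatrixPair R n, p.le q → r p q) := by
  refine ⟨fun p _ U => p.le_mul_left U, fun p _ V => p.mul_right_le V,
    fun p G => p.add_mul_le G, ?_⟩
  intro r _ htrans rule_mul_left rule_mul_right rule_add_mul p q
  exact MatrixPair.le_of_rules htrans rule_mul_left rule_mul_right rule_add_mul
end

section
/- Let A be an m×n matrix, B an m×k matrix, A' an m'×n matrix, and B' an m'×k' matrix over R. Define the pair (B | A) ∧ (B' | A') to be ( diag(B, B') | [A; A'] ), where diag(B, B') is the (m+m')×(k+k') block-diagonal matrix with blocks B and B', and [A; A'] is the (m+m')×n matrix obtained by stacking A above A'. Then (B | A) ∧ (B' | A') is an infimum of (B | A) and (B' | A') with respect to ≤ₙ: it satisfies (B | A) ∧ (B' | A') ≤ₙ (B | A) and (B | A) ∧ (B' | A') ≤ₙ (B' | A'), and for every pair (B'' | A'') with (B'' | A'') ≤ₙ (B | A) and (B'' | A'') ≤ₙ (B' | A'),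 one has (B'' | A'') ≤ₙ (B | A) ∧ (B' | A'). -/
/-!
The block projections `[1 0]` and `[0 1]` witness that the stacked pair lies below each
factor, and stacking row-wise the witnesses `(U₁, V₁, G₁)`, `(U₂, V₂, G₂)` of two lower
bounds witnesses the comparison with the stacked pair.
-/

/-- `(B | A) ≤ₙ (B' | A')`: there exist matrices `U`, `V`, `G` with
`U * B = B' * V` and `U * A = A' + B' * G`. -/
def MatPairLE (R : Type*) [Ring R] {m k m' k' n : Type*}
    [Fintype m] [Fintype k']
    (B : Matrix m k R) (A : Matrix m n R)
    (B' : Matrix m' k' R) (A' : Matrix m' n R) : Prop :=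
  ∃ (U : Matrix m' m R) (V : Matrix k' k R) (G : Matrix k' n R),
    U * B = B' * V ∧ U * A = A' + B' * G

open Matrix

namespace MatPairLE

variable {R : Type*} [Ring R] {m k m' k' n : Type*}

theorem fromBlocks_fromRows_left [Fintype m] [Fintype m'] [Fintype k]
    [DecidableEq m] [DecidableEq k]
    (B : Matrix m k R) (A : Matrix m n R) (B' : Matrix m' k' R) (A' : Matrix m' n R) :
    MatPairLE R (fromBlocks B 0 0 B') (fromRows A A') B A :=
  ⟨fromCols 1 0, fromCols 1 0, 0, by simp [fromCols_mul_fromBlocks],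
    by simp [fromCols_mul_fromRows]⟩

theorem fromBlocks_fromRows_right [Fintype m] [Fintype m'] [Fintype k']
    [DecidableEq m'] [DecidableEq k']
    (B : Matrix m k R) (A : Matrix m n R) (B' : Matrix m' k' R) (A' : Matrix m' n R) :
    MatPairLE R (fromBlocks B 0 0 B') (fromRows A A') B' A' :=
  ⟨fromCols 0 1, fromCols 0 1, 0, by simp [fromCols_mul_fromBlocks],
    by simp [fromCols_mul_fromRows]⟩

theorem le_fromBlocks_fromRows {m'' k'' : Type*} [Fintype k] [Fintype k'] [Fintype m'']
    {B : Matrix m k R} {A : Matrix m n R} {B' : Matrix m' k' R} {A' : Matrix m' n R}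
    {B'' : Matrix m'' k'' R} {A'' : Matrix m'' n R}
    (h : MatPairLE R B'' A'' B A) (h' : MatPairLE R B'' A'' B' A') :
    MatPairLE R B'' A'' (fromBlocks B 0 0 B') (fromRows A A') := by
  obtain ⟨U, V, G, hB, hA⟩ := h
  obtain ⟨U', V', G', hB', hA'⟩ := h'
  refine ⟨fromRows U U', fromRows V V', fromRows G G', ?_, ?_⟩
  · simp [fromBlocks_mul_fromRows, hB, hB']
  · rw [fromRows_mul, fromBlocks_mul_fromRows, hA, hA']
    ext (i | i) j <;> simp

end MatPairLE

/-- The pair `(diag(B, B') | [A; A'])` is an infimum of `(B | A)` and `(B' | A')`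
with respect to `≤ₙ`. -/
theorem pair_infimum {R : Type*} [Ring R] {m k m' k' n : ℕ}
    (B : Matrix (Fin m) (Fin k) R) (A : Matrix (Fin m) (Fin n) R)
    (B' : Matrix (Fin m') (Fin k') R) (A' : Matrix (Fin m') (Fin n) R) :
    MatPairLE R (Matrix.fromBlocks B 0 0 B') (Matrix.fromRows A A') B A ∧
    MatPairLE R (Matrix.fromBlocks B 0 0 B') (Matrix.fromRows A A') B' A' ∧
    (∀ (m'' k'' : ℕ) (B'' : Matrix (Fin m'') (Fin k'') R)
      (A'' : Matrix (Fin m'') (Fin n) R),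
      MatPairLE R B'' A'' B A → MatPairLE R B'' A'' B' A' →
      MatPairLE R B'' A'' (Matrix.fromBlocks B 0 0 B') (Matrix.fromRows A A')) :=
  ⟨MatPairLE.fromBlocks_fromRows_left B A B' A', MatPairLE.fromBlocks_fromRows_right B A B' A',
    fun _ _ _ _ => MatPairLE.le_fromBlocks_fromRows⟩
end

section
/- The following are equivalent for an m×k matrix B over R: (1) B is regular, i.e. there exists a k×m matrix C over R with BCB = B; (2) for every n and every m×n matrix A, there exists a matrix A' with n columns such that (B | A) ≈ₙ (0 | A'); (3) there exists a matrix A' with m columns such that (B | Iₘ) ≈ₘ (0 | A'), where Iₘ is the m×m identity matrix. -/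
/-- `(B | A) ≈ₙ (B' | A')`: both inequalities hold. -/
def MatPairEquiv (R : Type*) [Ring R] {m k m' k' n : Type*}
    [Fintype m] [Fintype k] [Fintype m'] [Fintype k']
    (B : Matrix m k R) (A : Matrix m n R)
    (B' : Matrix m' k' R) (A' : Matrix m' n R) : Prop :=
  MatPairLE R B A B' A' ∧ MatPairLE R B' A' B A

section

variable {R : Type*} [Ring R] {m k n : Type*} [Fintype m] [Fintype k]

/-- With `B * C * B = B`, the projection `1 - B * C` kills `B`, and `B * C * A` is absorbed
by the `B`-part of the pair. -/
theorem matPairEquiv_zero_sub_mul_mul_of_mul_mul_eq_self [DecidableEq m]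
    {B : Matrix m k R} {C : Matrix k m R} (hC : B * C * B = B) (A : Matrix m n R) :
    MatPairEquiv R B A (0 : Matrix m k R) (A - B * C * A) := by
  refine ⟨⟨1 - B * C, 0, 0, ?_, ?_⟩, ⟨1, 0, -(C * A), ?_, ?_⟩⟩
  · rw [Matrix.zero_mul, Matrix.sub_mul, Matrix.one_mul, hC, sub_self]
  · rw [Matrix.zero_mul, add_zero, Matrix.sub_mul, Matrix.one_mul]
  · rw [Matrix.mul_zero, Matrix.mul_zero]
  · rw [Matrix.one_mul, Matrix.mul_neg, ← Matrix.mul_assoc, sub_eq_add_neg]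

/-- The first inequality forces `A'` itself to annihilate `B`; the second writes
`1 = U * A' - B * G`, so multiplying by `B` on the right gives `B = -(B * G * B)`. -/
theorem exists_mul_mul_eq_self_of_matPairEquiv_one [DecidableEq m]
    {m' k' : Type*} [Fintype m'] [Fintype k'] {B : Matrix m k R}
    {A' : Matrix m' m R} (h : MatPairEquiv R B 1 (0 : Matrix m' k' R) A') :
    ∃ C : Matrix k m R, B * C * B = B := by
  obtain ⟨⟨U₀, _, _, hU₀B, hU₀⟩, ⟨U, _, G, -, hUA'⟩⟩ := h
  rw [Matrix.mul_one, Matrix.zero_mul, add_zero] at hU₀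
  rw [Matrix.zero_mul] at hU₀B
  subst hU₀
  have hBGB : B + B * G * B = 0 := by
    calc B + B * G * B = (1 + B * G) * B := by rw [Matrix.add_mul, Matrix.one_mul]
      _ = U * (U₀ * B) := by rw [← hUA', Matrix.mul_assoc]
      _ = 0 := by rw [hU₀B, Matrix.mul_zero]
  refine ⟨-G, ?_⟩
  rw [Matrix.mul_neg, Matrix.neg_mul, eq_neg_of_add_eq_zero_right hBGB, neg_neg]

end

/-- A matrix `B` is regular (`∃ C, B * C * B = B`) iff every pair `(B | A)` is
equivalent to a homogeneous system, iff `(B | Iₘ)` is equivalent to a homogeneous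
system. -/
theorem regular_matrix_tfae {R : Type*} [Ring R] {m k : ℕ}
    (B : Matrix (Fin m) (Fin k) R) :
    ((∃ C : Matrix (Fin k) (Fin m) R, B * C * B = B) ↔
      (∀ (n : ℕ) (A : Matrix (Fin m) (Fin n) R),
        ∃ (m' k' : ℕ) (A' : Matrix (Fin m') (Fin n) R),
          MatPairEquiv R B A (0 : Matrix (Fin m') (Fin k') R) A')) ∧
    ((∀ (n : ℕ) (A : Matrix (Fin m) (Fin n) R),
        ∃ (m' k' : ℕ) (A' : Matrix (Fin m') (Fin n) R),
          MatPairEquiv R B A (0 : Matrix (Fin m') (Fin k') R) A') ↔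
      (∃ (m' k' : ℕ) (A' : Matrix (Fin m') (Fin m) R),
        MatPairEquiv R B (1 : Matrix (Fin m) (Fin m) R)
          (0 : Matrix (Fin m') (Fin k') R) A')) := by
  have regular_to_homogeneous : (∃ C : Matrix (Fin k) (Fin m) R, B * C * B = B) →
      ∀ (n : ℕ) (A : Matrix (Fin m) (Fin n) R), ∃ (m' k' : ℕ) (A' : Matrix (Fin m') (Fin n) R),
        MatPairEquiv R B A (0 : Matrix (Fin m') (Fin k') R) A' :=
    fun ⟨_, hC⟩ _ A => ⟨m, k, _, matPairEquiv_zero_sub_mul_mul_of_mul_mul_eq_self hC A⟩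
  have identity_to_regular : (∃ (m' k' : ℕ) (A' : Matrix (Fin m') (Fin m) R),
      MatPairEquiv R B 1 (0 : Matrix (Fin m') (Fin k') R) A') →
      ∃ C : Matrix (Fin k) (Fin m) R, B * C * B = B :=
    fun ⟨_, _, _, h⟩ => exists_mul_mul_eq_self_of_matPairEquiv_one h
  exact ⟨⟨regular_to_homogeneous, fun h => identity_to_regular (h m 1)⟩,
    ⟨fun h => h m 1, fun h => regular_to_homogeneous (identity_to_regular h)⟩⟩
end

section
/- The following are equivalent for an associative ring R with identity: (1) R is von Neumann regular, i.e. for every r ∈ R there exists s ∈ R with rsr = r; (2) for every n ≥ 1 and every pair (B | A) with A having n columns, there exists a matrix A' with n columns such that (B | A) ≈ₙ (0 | A'); (3) for every pair (B | A) with A having 1 column, there exists a column matrix A' such that (B | A) ≈₁ (0 | A'). -/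
open Matrix

def MatricesRegular (R : Type*) [Ring R] (m k : Type*) [Fintype m] [Fintype k] : Prop :=
  ∀ B : Matrix m k R, ∃ C : Matrix k m R, B * C * B = B

namespace MatricesRegular

variable {R : Type*} [Ring R] {m m₀ m₁ m' k k₀ k₁ k' : Type*}
  [Fintype m] [Fintype m₀] [Fintype m₁] [Fintype m'] [Fintype k] [Fintype k₀] [Fintype k₁]
  [Fintype k']

theorem of_isEmpty_left [IsEmpty m] : MatricesRegular R m k :=
  fun _ => ⟨0, Subsingleton.elim _ _⟩

theorem of_isEmpty_right [IsEmpty k] : MatricesRegular R m k :=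
  fun _ => ⟨0, Subsingleton.elim _ _⟩

theorem of_equiv (h : MatricesRegular R m k) (e₁ : m ≃ m') (e₂ : k ≃ k') :
    MatricesRegular R m' k' := by
  intro B
  obtain ⟨C, hC⟩ := h (B.submatrix e₁ e₂)
  refine ⟨C.submatrix e₂.symm e₁.symm, ?_⟩
  calc B * C.submatrix e₂.symm e₁.symm * B
      = (B.submatrix e₁ e₂).submatrix e₁.symm e₂.symm * C.submatrix e₂.symm e₁.symm *
          (B.submatrix e₁ e₂).submatrix e₁.symm e₂.symm := by simp
    _ = (B.submatrix e₁ e₂ * C * B.submatrix e₁ e₂).submatrix e₁.symm e₂.symm := by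
      rw [submatrix_mul_equiv, submatrix_mul_equiv]
    _ = B := by simp [hC]

theorem iff_of_unique [Unique m] [Unique k] :
    MatricesRegular R m k ↔ ∀ r : R, ∃ s : R, r * s * r = r := by
  have entry (B : Matrix m k R) (C : Matrix k m R) :
      B * C * B = B ↔ B default default * C default default * B default default =
        B default default := by
    simp [← Matrix.ext_iff, mul_apply, Unique.forall_iff]
  constructor
  · intro h r
    obtain ⟨C, hC⟩ := h (of fun _ _ => r)
    exact ⟨C default default, (entry _ _).1 hC⟩
  · intro h B
    obtain ⟨s, hs⟩ := h (B default default)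
    exact ⟨of fun _ _ => s, (entry _ _).2 hs⟩

theorem fromCols_mul_mul_eq_fromCols {B₀ : Matrix m k₀ R} {B₁ : Matrix m k₁ R}
    {C₀ : Matrix k₀ m R} {C₁ : Matrix k₁ m R} (hC₀ : B₀ * C₀ * B₀ = B₀)
    (hC₁ : (B₁ - B₀ * C₀ * B₁) * C₁ * (B₁ - B₀ * C₀ * B₁) = B₁ - B₀ * C₀ * B₁) :
    let P := C₁ - C₁ * B₀ * C₀
    fromCols B₀ B₁ * fromRows (C₀ - C₀ * B₁ * P) P * fromCols B₀ B₁ = fromCols B₀ B₁ := by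
  intro P
  set D := B₁ - B₀ * C₀ * B₁
  have hBC : fromCols B₀ B₁ * fromRows (C₀ - C₀ * B₁ * P) P = B₀ * C₀ + D * P := by
    simp only [fromCols_mul_fromRows, D, Matrix.mul_sub, Matrix.sub_mul, Matrix.mul_assoc]
    abel
  have hPB₀ : P * B₀ = 0 := by
    rw [Matrix.sub_mul, Matrix.mul_assoc C₁, Matrix.mul_assoc C₁, hC₀, sub_self]
  have hPB₁ : D * P * B₁ = D := by
    calc D * P * B₁ = D * C₁ * D := by
          simp only [P, D, Matrix.mul_sub, Matrix.sub_mul, Matrix.mul_assoc]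
      _ = D := hC₁
  rw [hBC, mul_fromCols, Matrix.add_mul, Matrix.add_mul, hC₀, Matrix.mul_assoc D, hPB₀,
    Matrix.mul_zero, add_zero, hPB₁, add_sub_cancel]

theorem fromRows_mul_mul_eq_fromRows {B₀ : Matrix m₀ k R} {B₁ : Matrix m₁ k R}
    {C₀ : Matrix k m₀ R} {C₁ : Matrix k m₁ R} (hC₀ : B₀ * C₀ * B₀ = B₀)
    (hC₁ : (B₁ - B₁ * C₀ * B₀) * C₁ * (B₁ - B₁ * C₀ * B₀) = B₁ - B₁ * C₀ * B₀) :
    let Q := C₁ - C₀ * B₀ * C₁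
    fromRows B₀ B₁ * fromCols (C₀ - Q * B₁ * C₀) Q * fromRows B₀ B₁ = fromRows B₀ B₁ := by
  intro Q
  set D := B₁ - B₁ * C₀ * B₀
  have hCB : fromCols (C₀ - Q * B₁ * C₀) Q * fromRows B₀ B₁ = C₀ * B₀ + Q * D := by
    simp only [fromCols_mul_fromRows, D, Matrix.mul_sub, Matrix.sub_mul, Matrix.mul_assoc]
    abel
  have hB₀Q : B₀ * Q = 0 := by
    rw [Matrix.mul_sub, ← Matrix.mul_assoc, ← Matrix.mul_assoc, hC₀, sub_self]
  have hB₁Q : B₁ * Q * D = D := by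
    calc B₁ * Q * D = D * C₁ * D := by
          simp only [Q, D, Matrix.mul_sub, Matrix.sub_mul, Matrix.mul_assoc]
      _ = D := hC₁
  rw [Matrix.mul_assoc, hCB, fromRows_mul, Matrix.mul_add, Matrix.mul_add, ← Matrix.mul_assoc,
    hC₀, ← Matrix.mul_assoc B₀, hB₀Q, Matrix.zero_mul, add_zero, ← Matrix.mul_assoc B₁ Q,
    hB₁Q, ← Matrix.mul_assoc, add_sub_cancel]

theorem sum_cols (h₀ : MatricesRegular R m k₀) (h₁ : MatricesRegular R m k₁) :
    MatricesRegular R m (k₀ ⊕ k₁) := by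
  intro B
  obtain ⟨C₀, hC₀⟩ := h₀ B.toCols₁
  obtain ⟨C₁, hC₁⟩ := h₁ (B.toCols₂ - B.toCols₁ * C₀ * B.toCols₂)
  rw [← fromCols_toCols B]
  exact ⟨_, fromCols_mul_mul_eq_fromCols hC₀ hC₁⟩

theorem sum_rows (h₀ : MatricesRegular R m₀ k) (h₁ : MatricesRegular R m₁ k) :
    MatricesRegular R (m₀ ⊕ m₁) k := by
  intro B
  obtain ⟨C₀, hC₀⟩ := h₀ B.toRows₁
  obtain ⟨C₁, hC₁⟩ := h₁ (B.toRows₂ - B.toRows₂ * C₀ * B.toRows₁)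
  rw [← fromRows_toRows B]
  exact ⟨_, fromRows_mul_mul_eq_fromRows hC₀ hC₁⟩

theorem fin (hR : ∀ r : R, ∃ s : R, r * s * r = r) (m k : ℕ) :
    MatricesRegular R (Fin m) (Fin k) := by
  have scalar : MatricesRegular R (Fin 1) (Fin 1) := iff_of_unique.2 hR
  have column (m : ℕ) : MatricesRegular R (Fin m) (Fin 1) := by
    induction m with
    | zero => exact of_isEmpty_left
    | succ m ih => exact (ih.sum_rows scalar).of_equiv finSumFinEquiv (Equiv.refl _)
  induction k with
  | zero => exact of_isEmpty_right
  | succ k ih => exact (ih.sum_cols (column m)).of_equiv (Equiv.refl _) finSumFinEquiv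

end MatricesRegular

section MatPair

variable {R : Type*} [Ring R] {m m' k k' n : Type*} [Fintype m] [Fintype m'] [Fintype k]
  [Fintype k']

theorem matPairEquiv_zero_of_mul_mul_eq [DecidableEq m] {B : Matrix m k R} {C : Matrix k m R}
    (hC : B * C * B = B) (A : Matrix m n R) :
    MatPairEquiv R B A (0 : Matrix m k' R) (A - B * (C * A)) := by
  refine ⟨⟨1 - B * C, 0, 0, ?_, ?_⟩, ⟨1, 0, -(C * A), ?_, ?_⟩⟩
  · rw [Matrix.sub_mul, Matrix.one_mul, hC, sub_self, Matrix.zero_mul]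
  · rw [Matrix.sub_mul, Matrix.one_mul, Matrix.mul_assoc, Matrix.zero_mul, add_zero]
  · rw [Matrix.one_mul, Matrix.mul_zero]
  · rw [Matrix.one_mul, Matrix.mul_neg, sub_eq_add_neg]

theorem exists_mul_mul_eq_of_matPairEquiv_one [DecidableEq m] {B : Matrix m k R}
    {A' : Matrix m' m R} (h : MatPairEquiv R B (1 : Matrix m m R) (0 : Matrix m' k' R) A') :
    ∃ C : Matrix k m R, B * C * B = B := by
  obtain ⟨⟨U, _, _, hUB, hUA⟩, U₂, -, G₂, -, hUA₂⟩ := h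
  rw [Matrix.zero_mul] at hUB
  rw [Matrix.mul_one, Matrix.zero_mul, add_zero] at hUA
  rw [← hUA] at hUA₂
  have : B + B * G₂ * B = 0 :=
    calc B + B * G₂ * B = (1 + B * G₂) * B := by rw [Matrix.add_mul, Matrix.one_mul]
      _ = U₂ * (U * B) := by rw [← hUA₂, Matrix.mul_assoc]
      _ = 0 := by rw [hUB, Matrix.mul_zero]
  exact ⟨-G₂, by rw [Matrix.mul_neg, Matrix.neg_mul, (eq_neg_of_add_eq_zero_left this).symm]⟩

end MatPair

def PairsEquivHomogeneous (R : Type*) [Ring R] (n : ℕ) : Prop :=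
  ∀ (m k : ℕ) (B : Matrix (Fin m) (Fin k) R) (A : Matrix (Fin m) (Fin n) R),
    ∃ (m' k' : ℕ) (A' : Matrix (Fin m') (Fin n) R),
      MatPairEquiv R B A (0 : Matrix (Fin m') (Fin k') R) A'

section

variable {R : Type*} [Ring R]

theorem pairsEquivHomogeneous_of_regular (hR : ∀ r : R, ∃ s : R, r * s * r = r) (n : ℕ) :
    PairsEquivHomogeneous R n := by
  intro m k B A
  obtain ⟨C, hC⟩ := MatricesRegular.fin hR m k B
  exact ⟨m, k, _, matPairEquiv_zero_of_mul_mul_eq hC A⟩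

theorem regular_of_pairsEquivHomogeneous_one (h : PairsEquivHomogeneous R 1) :
    ∀ r : R, ∃ s : R, r * s * r = r :=
  MatricesRegular.iff_of_unique.1 fun B =>
    let ⟨_, _, _, hB⟩ := h 1 1 B 1
    exists_mul_mul_eq_of_matPairEquiv_one hB

end

/-- `R` is von Neumann regular iff for every `n ≥ 1` (resp. `n = 1`) every pair
`(B | A)` with `A` having `n` columns is equivalent to a homogeneous system. -/
theorem von_neumann_regular_tfae (R : Type*) [Ring R] :
    ((∀ r : R, ∃ s : R, r * s * r = r) ↔
      (∀ (n : ℕ), 1 ≤ n →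
        ∀ (m k : ℕ) (B : Matrix (Fin m) (Fin k) R) (A : Matrix (Fin m) (Fin n) R),
          ∃ (m' k' : ℕ) (A' : Matrix (Fin m') (Fin n) R),
            MatPairEquiv R B A (0 : Matrix (Fin m') (Fin k') R) A')) ∧
    ((∀ (n : ℕ), 1 ≤ n →
        ∀ (m k : ℕ) (B : Matrix (Fin m) (Fin k) R) (A : Matrix (Fin m) (Fin n) R),
          ∃ (m' k' : ℕ) (A' : Matrix (Fin m') (Fin n) R),
            MatPairEquiv R B A (0 : Matrix (Fin m') (Fin k') R) A') ↔
      (∀ (m k : ℕ) (B : Matrix (Fin m) (Fin k) R) (A : Matrix (Fin m) (Fin 1) R),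
        ∃ (m' k' : ℕ) (A' : Matrix (Fin m') (Fin 1) R),
          MatPairEquiv R B A (0 : Matrix (Fin m') (Fin k') R) A')) := by
  have h12 := fun hR n (_ : 1 ≤ n) => pairsEquivHomogeneous_of_regular (R := R) hR n
  have h31 := regular_of_pairsEquivHomogeneous_one (R := R)
  exact ⟨⟨h12, fun h2 => h31 (h2 1 le_rfl)⟩, ⟨fun h2 => h2 1 le_rfl, fun h3 => h12 (h31 h3)⟩⟩
end

section
/- Suppose (B | A) ≤ₙ (B' | A') holds for matrices over R, where A is m×n, B is m×k, A' is m'×n, and B' is m'×k'. Then over the opposite ring Rᵒᵖ, the dual pairs satisfy ( [B'ᵀ; A'ᵀ] | [0; Iₙ] ) ≤ₙ ( [Bᵀ; Aᵀ] | [0; Iₙ] ), where for a matrix X over R, Xᵀ denotes the matrix over Rᵒᵖ whose (i,j) entry is the opposite-ring image of the (j,i) entry of X, [Bᵀ; Aᵀ] denotes the (k+n)×m matrix stacking Bᵀ above Aᵀ, and [0; Iₙ] denotes the (k+n)×n matrix stacking the k×n zero matrix above the n×n identity matrix, and where ≤ₙ on pairs over Rᵒᵖ is defined exactly as over R. -/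
/-- The matrix over `Rᵒᵖ` whose `(i,j)` entry is the opposite-ring image of the
`(j,i)` entry of `X`. -/
def opTranspose {R : Type*} [Ring R] {m n : Type*} (X : Matrix m n R) :
    Matrix n m Rᵐᵒᵖ :=
  Matrix.of fun i j => MulOpposite.op (X j i)

section opTranspose

variable {R : Type*} [Ring R] {m n o : Type*}

lemma opTranspose_mul [Fintype n] (X : Matrix m n R) (Y : Matrix n o R) :
    opTranspose (X * Y) = opTranspose Y * opTranspose X := by
  ext i j
  simp [opTranspose, Matrix.mul_apply]

lemma opTranspose_add (X Y : Matrix m n R) :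
    opTranspose (X + Y) = opTranspose X + opTranspose Y := by
  ext i j
  simp [opTranspose]

end opTranspose

/-- Transposing the two defining equations gives `Bᵀ Uᵀ = Vᵀ B'ᵀ` and
`Aᵀ Uᵀ = A'ᵀ + Gᵀ B'ᵀ`: the block matrix `[[Vᵀ, 0], [Gᵀ, 1]]` carries `[B'ᵀ; A'ᵀ]` to
`[Bᵀ; Aᵀ] Uᵀ` and fixes `[0; 1]`. -/
theorem MatPairLE.dual {R : Type*} [Ring R] {m k m' k' n : Type*}
    [Fintype m] [Fintype k'] [Fintype n] [DecidableEq n]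
    {B : Matrix m k R} {A : Matrix m n R} {B' : Matrix m' k' R} {A' : Matrix m' n R}
    (h : MatPairLE R B A B' A') :
    MatPairLE Rᵐᵒᵖ
      (Matrix.fromRows (opTranspose B') (opTranspose A'))
      (Matrix.fromRows (0 : Matrix k' n Rᵐᵒᵖ) (1 : Matrix n n Rᵐᵒᵖ))
      (Matrix.fromRows (opTranspose B) (opTranspose A))
      (Matrix.fromRows (0 : Matrix k n Rᵐᵒᵖ) (1 : Matrix n n Rᵐᵒᵖ)) := by
  obtain ⟨U, V, G, hB, hA⟩ := h
  have hBop : opTranspose B * opTranspose U = opTranspose V * opTranspose B' := by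
    rw [← opTranspose_mul, hB, opTranspose_mul]
  have hAop : opTranspose A * opTranspose U =
      opTranspose A' + opTranspose G * opTranspose B' := by
    rw [← opTranspose_mul, hA, opTranspose_add, opTranspose_mul]
  refine ⟨Matrix.fromBlocks (opTranspose V) 0 (opTranspose G) 1, opTranspose U, 0, ?_, ?_⟩
  · rw [Matrix.fromBlocks_mul_fromRows, Matrix.fromRows_mul, hBop, hAop,
      Matrix.zero_mul, add_zero, Matrix.one_mul, add_comm]
  · simp [Matrix.fromBlocks_mul_fromRows]

/-- If `(B | A) ≤ₙ (B' | A')` over `R`, then over `Rᵒᵖ` the dual pairs satisfy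
`([B'ᵀ; A'ᵀ] | [0; Iₙ]) ≤ₙ ([Bᵀ; Aᵀ] | [0; Iₙ])`. -/
theorem dual_pair_le {R : Type*} [Ring R] {m k m' k' n : ℕ}
    (B : Matrix (Fin m) (Fin k) R) (A : Matrix (Fin m) (Fin n) R)
    (B' : Matrix (Fin m') (Fin k') R) (A' : Matrix (Fin m') (Fin n) R)
    (h : MatPairLE R B A B' A') :
    MatPairLE Rᵐᵒᵖ
      (Matrix.fromRows (opTranspose B') (opTranspose A'))
      (Matrix.fromRows (0 : Matrix (Fin k') (Fin n) Rᵐᵒᵖ)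
        (1 : Matrix (Fin n) (Fin n) Rᵐᵒᵖ))
      (Matrix.fromRows (opTranspose B) (opTranspose A))
      (Matrix.fromRows (0 : Matrix (Fin k) (Fin n) Rᵐᵒᵖ)
        (1 : Matrix (Fin n) (Fin n) Rᵐᵒᵖ)) :=
  h.dual
end

section
/- Suppose (B | A) ≤ₙ (B' | A') for matrices over R, where A is m×n, B is m×k, A' is m'×n, and B' is m'×k'. Then the (m+m')×(k+n+k') block matrices [[B, A, 0], [0, 0, B']] and [[B, A, 0], [0, A', B']] present isomorphic left R-modules; that is, there is an isomorphism of left R-modules between the cokernel of the linear map R^{m+m'} → R^{k+n+k'} given by right multiplication by the first block matrix and the cokernel of the linear map R^{m+m'} → R^{k+n+k'} given by right multiplication by the second block matrix. -/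
open Matrix

namespace Matrix

variable {R : Type*}

theorem vecMulLinear_mul [Semiring R] {l m n : Type*} [Fintype l] [Fintype m]
    (M : Matrix l m R) (N : Matrix m n R) :
    (M * N).vecMulLinear = N.vecMulLinear ∘ₗ M.vecMulLinear :=
  LinearMap.ext fun v => (vecMul_vecMul v M N).symm

variable [Ring R]

theorem range_vecMulLinear_mul_of_mul_eq_one {l l' n : Type*} [Fintype l] [Fintype l']
    [DecidableEq l'] {E : Matrix l l' R} {F : Matrix l' l R} (hFE : F * E = 1) (C : Matrix l' n R) :
    LinearMap.range (E * C).vecMulLinear = LinearMap.range C.vecMulLinear := by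
  refine le_antisymm ?_ ?_
  · rw [vecMulLinear_mul]
    exact LinearMap.range_comp_le_range _ _
  · conv_lhs => rw [← Matrix.one_mul C, ← hFE, Matrix.mul_assoc, vecMulLinear_mul]
    exact LinearMap.range_comp_le_range _ _

theorem fromBlocks_one_zero_mul_neg {l n : Type*} [Fintype l] [Fintype n]
    [DecidableEq l] [DecidableEq n] (X : Matrix n l R) :
    fromBlocks (1 : Matrix l l R) 0 X (1 : Matrix n n R) * fromBlocks 1 0 (-X) 1 = 1 := by
  rw [fromBlocks_multiply, ← fromBlocks_one]
  simp

theorem fromBlocks_one_zero_neg_mul {l n : Type*} [Fintype l] [Fintype n]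
    [DecidableEq l] [DecidableEq n] (X : Matrix n l R) :
    fromBlocks (1 : Matrix l l R) 0 (-X) (1 : Matrix n n R) * fromBlocks 1 0 X 1 = 1 := by
  simpa using fromBlocks_one_zero_mul_neg (-X)

noncomputable def quotRangeVecMulEquivOfMulEq {l l' n : Type*} [Fintype l] [Fintype l']
    [DecidableEq l'] [Fintype n] [DecidableEq n] {C : Matrix l n R} {C' : Matrix l' n R}
    {P Q : Matrix n n R} {E : Matrix l l' R} {F : Matrix l' l R} (hPQ : P * Q = 1) (hQP : Q * P = 1)
    (hFE : F * E = 1) (hC : C * P = E * C') :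
    ((n → R) ⧸ LinearMap.range C.vecMulLinear) ≃ₗ[R]
      ((n → R) ⧸ LinearMap.range C'.vecMulLinear) :=
  Submodule.Quotient.equiv _ _ (toLinearEquivRight'OfInv hQP hPQ) <| by
    rw [← range_vecMulLinear_mul_of_mul_eq_one hFE C', ← hC, vecMulLinear_mul,
      LinearMap.range_comp]
    rfl

theorem fromBlocks_mul_fromBlocks_one_zero {l l' p q : Type*} [Fintype l] [Fintype l']
    [Fintype p] [Fintype q] [DecidableEq l] [DecidableEq l'] [DecidableEq p] [DecidableEq q]
    {C : Matrix l p R} {B' : Matrix l' q R} {D : Matrix l' p R} {U : Matrix l' l R}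
    {W : Matrix q p R} (h : U * C = D + B' * W) :
    fromBlocks C 0 0 B' * fromBlocks (1 : Matrix p p R) 0 (-W) (1 : Matrix q q R) =
      fromBlocks (1 : Matrix l l R) 0 (-U) (1 : Matrix l' l' R) * fromBlocks C 0 D B' := by
  rw [fromBlocks_multiply, fromBlocks_multiply, Matrix.mul_neg, Matrix.neg_mul, h]
  simp

end Matrix

theorem MatPairLE.exists_mul_fromCols_eq {R : Type*} [Ring R] {m k m' k' n : Type*}
    [Fintype m] [Fintype k'] {B : Matrix m k R} {A : Matrix m n R}
    {B' : Matrix m' k' R} {A' : Matrix m' n R} (h : MatPairLE R B A B' A') :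
    ∃ (U : Matrix m' m R) (W : Matrix k' (k ⊕ n) R),
      U * fromCols B A = fromCols 0 A' + B' * W := by
  obtain ⟨U, V, G, hB, hA⟩ := h
  refine ⟨U, fromCols V G, ?_⟩
  rw [mul_fromCols, mul_fromCols, hB, hA]
  ext i (j | j) <;> simp

/-- If `(B | A) ≤ₙ (B' | A')`, then the block matrices `[[B, A, 0], [0, 0, B']]` and
`[[B, A, 0], [0, A', B']]` present isomorphic left `R`-modules: the cokernels of the
corresponding right-multiplication maps are isomorphic. -/
theorem block_presentations_isomorphic {R : Type*} [Ring R] {m k m' k' n : ℕ}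
    (B : Matrix (Fin m) (Fin k) R) (A : Matrix (Fin m) (Fin n) R)
    (B' : Matrix (Fin m') (Fin k') R) (A' : Matrix (Fin m') (Fin n) R)
    (h : MatPairLE R B A B' A') :
    Nonempty (
      (((Fin k ⊕ Fin n) ⊕ Fin k' → R) ⧸
        LinearMap.range (Matrix.fromBlocks (Matrix.fromCols B A)
          (0 : Matrix (Fin m) (Fin k') R)
          (0 : Matrix (Fin m') (Fin k ⊕ Fin n) R) B').vecMulLinear) ≃ₗ[R]
      (((Fin k ⊕ Fin n) ⊕ Fin k' → R) ⧸
        LinearMap.range (Matrix.fromBlocks (Matrix.fromCols B A)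
          (0 : Matrix (Fin m) (Fin k') R)
          (Matrix.fromCols (0 : Matrix (Fin m') (Fin k) R) A')
          B').vecMulLinear)) := by
  obtain ⟨U, W, hUW⟩ := h.exists_mul_fromCols_eq
  exact ⟨quotRangeVecMulEquivOfMulEq (fromBlocks_one_zero_neg_mul W)
    (fromBlocks_one_zero_mul_neg W) (fromBlocks_one_zero_mul_neg U)
    (fromBlocks_mul_fromBlocks_one_zero hUW)⟩
end

section
/- Let A be an m×n matrix, A' an m×n' matrix, and B an m×k matrix over R. If ( (B, A) | A' ) ≤ₙ' (B | A') then ( (B, A') | A ) ≤ₙ (B | A), where (B, A) denotes the m×(k+n) matrix obtained by placing A to the right of B, and (B, A') the m×(k+n') matrix obtained by placing A' to the right of B. -/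
/-! If `U` witnesses the hypothesis, it maps the columns of `A` into the column space of `B`
and fixes `A'` modulo that column space, while preserving the column space of `B`.
Hence `1 - U` does the reverse: it kills `A'` and fixes `A`, both modulo the column
space of `B`, which is exactly what the conclusion asks for. -/

namespace Matrix

variable {R : Type*} [Ring R] {m k k₁ k₂ m' k' n : Type*} [Fintype m] [Fintype k']

theorem matPairLE_fromCols_iff
    (B₁ : Matrix m k₁ R) (B₂ : Matrix m k₂ R) (A : Matrix m n R)
    (B' : Matrix m' k' R) (A' : Matrix m' n R) :
    MatPairLE R (fromCols B₁ B₂) A B' A' ↔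
      ∃ (U : Matrix m' m R) (V₁ : Matrix k' k₁ R) (V₂ : Matrix k' k₂ R) (G : Matrix k' n R),
        U * B₁ = B' * V₁ ∧ U * B₂ = B' * V₂ ∧ U * A = A' + B' * G := by
  constructor
  · rintro ⟨U, V, G, hB, hA⟩
    rw [← fromCols_toCols V, mul_fromCols, mul_fromCols, fromCols_ext_iff] at hB
    exact ⟨U, V.toCols₁, V.toCols₂, G, hB.1, hB.2, hA⟩
  · rintro ⟨U, V₁, V₂, G, hB₁, hB₂, hA⟩
    exact ⟨U, fromCols V₁ V₂, G, by rw [mul_fromCols, mul_fromCols, hB₁, hB₂], hA⟩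

theorem matPairLE_fromCols_swap [DecidableEq m] [Fintype k] [DecidableEq k] {n' : Type*}
    (B : Matrix m k R) (A : Matrix m n R) (A' : Matrix m n' R)
    (h : MatPairLE R (fromCols B A) A' B A') :
    MatPairLE R (fromCols B A') A B A := by
  obtain ⟨U, V₁, V₂, G, hB, hA, hA'⟩ := (matPairLE_fromCols_iff B A A' B A').1 h
  refine (matPairLE_fromCols_iff B A' A B A).2 ⟨1 - U, 1 - V₁, -G, -V₂, ?_, ?_, ?_⟩
  · rw [Matrix.sub_mul, Matrix.mul_sub, hB, Matrix.one_mul, Matrix.mul_one]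
  · rw [Matrix.sub_mul, hA', Matrix.one_mul, Matrix.mul_neg, sub_add_cancel_left]
  · rw [Matrix.sub_mul, hA, Matrix.one_mul, Matrix.mul_neg, sub_eq_add_neg]

end Matrix

/-- If `((B, A) | A') ≤ₙ' (B | A')` then `((B, A') | A) ≤ₙ (B | A)`. -/
theorem degenerate_swap {R : Type*} [Ring R] {m k n n' : ℕ}
    (B : Matrix (Fin m) (Fin k) R) (A : Matrix (Fin m) (Fin n) R)
    (A' : Matrix (Fin m) (Fin n') R)
    (h : MatPairLE R (Matrix.fromCols B A) A' B A') :
    MatPairLE R (Matrix.fromCols B A') A B A :=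
  Matrix.matPairLE_fromCols_swap B A A' h
end

section
/- (Lemma Presta II.) Let A, A' be matrices over R with n columns (A of size m×n, A' of size m'×n), and let B be m×k and B' be m'×k'. Then (B | A) ≤ₙ (B' | A') if and only if for every left R-module M, the subgroup (B | A)(M) of Mⁿ is contained in (B' | A')(M); here (B | A)(M) := { a ∈ Mⁿ : there exists c ∈ Mᵏ such that for every i, Σⱼ Bᵢⱼ·cⱼ = Σⱼ Aᵢⱼ·aⱼ }. -/
universe u

/-!
Forward: in any module, `U` turns a solution `c` of `B c = A a` into the solution `V c - G a`
of `B' c' = A' a`. Backward: in the module presented by generators `x` (indexed by the columns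
of `A`) and `y` (by those of `B`) subject to `A x = B y`, the tuple `x` lies in `(B | A)(M)`, hence
`B' c' = A' x` for some `c'`. Lifting `c'` to the free module, every row of `B' c' - A' x` is a
combination of the relations; the coefficients form `U`, and the `y`- and `x`-parts of the lift
give `V` and `-G`.
-/

open Submodule

namespace Matrix

variable {R M N : Type*} [Ring R] [AddCommGroup M] [Module R M] [AddCommGroup N] [Module R N]
  {l m n k : Type*}

def smulVec [Fintype n] (A : Matrix m n R) (x : n → M) : m → M :=
  fun i => ∑ j, A i j • x j

section smulVec

variable [Fintype n]

lemma smulVec_add (A : Matrix m n R) (x y : n → M) :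
    A.smulVec (x + y) = A.smulVec x + A.smulVec y := by
  ext i; simp [smulVec, Finset.sum_add_distrib]

lemma smulVec_sub (A : Matrix m n R) (x y : n → M) :
    A.smulVec (x - y) = A.smulVec x - A.smulVec y := by
  ext i; simp [smulVec, smul_sub]

lemma add_smulVec (A A' : Matrix m n R) (x : n → M) :
    (A + A').smulVec x = A.smulVec x + A'.smulVec x := by
  ext i; simp [smulVec, add_smul, Finset.sum_add_distrib]

lemma sub_smulVec (A A' : Matrix m n R) (x : n → M) :
    (A - A').smulVec x = A.smulVec x - A'.smulVec x := by
  ext i; simp [smulVec, sub_smul]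

lemma neg_smulVec (A : Matrix m n R) (x : n → M) : (-A).smulVec x = -A.smulVec x := by
  ext i; simp [smulVec]

lemma mul_smulVec [Fintype m] (P : Matrix l m R) (Q : Matrix m n R) (x : n → M) :
    (P * Q).smulVec x = P.smulVec (Q.smulVec x) := by
  ext i
  simp only [smulVec, mul_apply, Finset.sum_smul, Finset.smul_sum, mul_smul]
  exact Finset.sum_comm

lemma fromCols_smulVec_sumElim [Fintype k] (P : Matrix m n R) (Q : Matrix m k R)
    (x : n → M) (y : k → M) :
    (fromCols P Q).smulVec (Sum.elim x y) = P.smulVec x + Q.smulVec y := by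
  ext i; simp [smulVec, Fintype.sum_sum_type]

lemma smulVec_comp_linearMap (A : Matrix m n R) (f : M →ₗ[R] N) (x : n → M) :
    A.smulVec (f ∘ x) = f ∘ A.smulVec x := by
  ext i; simp [smulVec]

lemma smulVec_basisFun (A : Matrix m n R) : A.smulVec (Pi.basisFun R n) = A.row :=
  funext fun i => (Pi.basisFun R n).sum_repr (A i)

end smulVec

lemma exists_mul_eq_of_row_mem_span [Fintype m] {C : Matrix m n R} {X : Matrix l n R}
    (hX : ∀ i, X i ∈ span R (Set.range C.row)) : ∃ W : Matrix l m R, W * C = X := by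
  simp only [← range_vecMulLinear, LinearMap.mem_range, vecMulLinear_apply] at hX
  choose W hW using hX
  exact ⟨W, funext fun i => (mul_apply_eq_vecMul W C i).trans (hW i)⟩

end Matrix

open Matrix

variable {R M : Type*} [Ring R] [AddCommGroup M] [Module R M] {m k n m' k' : Type*}

/-- The pp-definable subgroup `(B | A)(M)`. -/
def ppSet [Fintype n] [Fintype k] (B : Matrix m k R) (A : Matrix m n R) (M : Type*)
    [AddCommGroup M] [Module R M] : Set (n → M) :=
  {a | ∃ c, B.smulVec c = A.smulVec a}

lemma mem_ppSet_iff [Fintype n] [Fintype k] {B : Matrix m k R} {A : Matrix m n R} {a : n → M} :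
    a ∈ ppSet B A M ↔ ∃ c : k → M, ∀ i, ∑ j, B i j • c j = ∑ j, A i j • a j :=
  exists_congr fun _ => funext_iff

theorem MatPairLE.ppSet_subset [Fintype m] [Fintype n] [Fintype k] [Fintype k']
    {B : Matrix m k R} {A : Matrix m n R} {B' : Matrix m' k' R} {A' : Matrix m' n R}
    (h : MatPairLE R B A B' A') : ppSet B A M ⊆ ppSet B' A' M := by
  obtain ⟨U, V, G, hUB, hUA⟩ := h
  rintro a ⟨c, hc⟩
  refine ⟨V.smulVec c - G.smulVec a, ?_⟩
  calc B'.smulVec (V.smulVec c - G.smulVec a)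
      = (U * B).smulVec c - (B' * G).smulVec a := by
        rw [smulVec_sub, hUB, mul_smulVec, mul_smulVec]
    _ = (U * A).smulVec a - (B' * G).smulVec a := by rw [mul_smulVec, hc, ← mul_smulVec]
    _ = A'.smulVec a := by rw [hUA, add_smulVec, add_sub_cancel_right]

section Presentation

variable [Fintype n] [Fintype k] (B : Matrix m k R) (A : Matrix m n R)

def PresentedModule.relations : Submodule R (n ⊕ k → R) :=
  span R (Set.range (fromCols (-A) B).row)

abbrev PresentedModule : Type _ := (n ⊕ k → R) ⧸ PresentedModule.relations B A

namespace PresentedModule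

noncomputable def gen : n ⊕ k → PresentedModule B A :=
  (relations B A).mkQ ∘ Pi.basisFun R (n ⊕ k)

lemma smulVec_gen {l : Type*} (X : Matrix l (n ⊕ k) R) :
    X.smulVec (gen B A) = (relations B A).mkQ ∘ X.row := by
  rw [gen, smulVec_comp_linearMap, smulVec_basisFun]

lemma gen_inl_mem_ppSet : gen B A ∘ Sum.inl ∈ ppSet B A (PresentedModule B A) := by
  refine ⟨gen B A ∘ Sum.inr, ?_⟩
  have hrel : (fromCols (-A) B).smulVec (gen B A) = 0 := by
    rw [smulVec_gen]
    exact funext fun i => (Quotient.mk_eq_zero _).2 (subset_span ⟨i, rfl⟩)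
  rwa [← Sum.elim_comp_inl_inr (gen B A), fromCols_smulVec_sumElim, neg_smulVec,
    neg_add_eq_zero, eq_comm] at hrel

variable {B A}

theorem _root_.MatPairLE.of_gen_mem [Fintype m] [Fintype k']
    {B' : Matrix m' k' R} {A' : Matrix m' n R}
    (h : gen B A ∘ Sum.inl ∈ ppSet B' A' (PresentedModule B A)) : MatPairLE R B A B' A' := by
  obtain ⟨c', hc'⟩ := h
  set g := gen B A
  choose F hF using fun t => (relations B A).mkQ_surjective (c' t)
  set F₁ := (of F).toCols₁
  set F₂ := (of F).toCols₂
  have hlift : F₁.smulVec (g ∘ Sum.inl) + F₂.smulVec (g ∘ Sum.inr) = c' := by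
    rw [← fromCols_smulVec_sumElim, Sum.elim_comp_inl_inr, fromCols_toCols, smulVec_gen]
    exact funext hF
  have hrows : ∀ i, fromCols (B' * F₁ - A') (B' * F₂) i ∈ relations B A := by
    have : (fromCols (B' * F₁ - A') (B' * F₂)).smulVec g = 0 := by
      rw [← Sum.elim_comp_inl_inr g, fromCols_smulVec_sumElim, sub_smulVec, mul_smulVec,
        mul_smulVec, sub_add_eq_add_sub, ← smulVec_add, hlift, hc', sub_self]
    rw [smulVec_gen] at this
    exact fun i => (Quotient.mk_eq_zero _).1 (congrFun this i)
  obtain ⟨W, hW⟩ := exists_mul_eq_of_row_mem_span hrows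
  rw [mul_fromCols] at hW
  obtain ⟨hWA, hWB⟩ := fromCols_inj hW
  refine ⟨W, F₂, -F₁, hWB, ?_⟩
  rw [Matrix.mul_neg, ← neg_neg (W * A), ← Matrix.mul_neg, hWA, neg_sub, sub_eq_add_neg]

end PresentedModule

end Presentation

/-- Lemma Presta II: `(B | A) ≤ₙ (B' | A')` iff for every left `R`-module `M`, the
subgroup `(B | A)(M) = {a ∈ Mⁿ : ∃ c ∈ Mᵏ, B·c = A·a}` of `Mⁿ` is contained in
`(B' | A')(M)`. -/
theorem lemma_presta_II {R : Type u} [Ring R] {m k m' k' n : ℕ}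
    (B : Matrix (Fin m) (Fin k) R) (A : Matrix (Fin m) (Fin n) R)
    (B' : Matrix (Fin m') (Fin k') R) (A' : Matrix (Fin m') (Fin n) R) :
    MatPairLE R B A B' A' ↔
      ∀ (M : Type u) [AddCommGroup M] [Module R M] (a : Fin n → M),
        (∃ c : Fin k → M, ∀ i, ∑ j, B i j • c j = ∑ j, A i j • a j) →
        (∃ c : Fin k' → M, ∀ i, ∑ j, B' i j • c j = ∑ j, A' i j • a j) := by
  refine ⟨fun h M _ _ a ha => ?_, fun h => ?_⟩
  · exact mem_ppSet_iff.1 (h.ppSet_subset (mem_ppSet_iff.2 ha))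
  · refine MatPairLE.of_gen_mem (mem_ppSet_iff.2 ?_)
    exact h _ _ (mem_ppSet_iff.1 (PresentedModule.gen_inl_mem_ppSet B A))
end
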